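/- Equilibria are monotone in B: if B¹_i ⪯ B²_i for all i ∈ I (each B^m_i ∈ S_≻^{H_i}), and X¹, X² are the unique equilibria (fixed points of the corresponding maps F¹, F²), then X¹_i ⪯ X²_i for all i. -/

import Mathlib

open Matrix BigOperators Filter Topology

/-- Orthogonal projection onto the coordinate subspace determined by `S`. -/
noncomputable def proj (K : Type*) [Fintype K] [DecidableEq K] (S : Finset K) :
    Matrix K K ℝ :=
  Matrix.diagonal (fun k => if k ∈ S then (1 : ℝ) else 0)

/-- `B ∈ S_≻^{H}` : symmetric nonnegative definite, vanishing on vectors orthogonal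
to the coordinate subspace `H` given by `S`, and strictly positive definite on `H`. -/
def SPDOn {K : Type*} [Fintype K] [DecidableEq K] (S : Finset K) (B : Matrix K K ℝ) : Prop :=
  B.PosSemidef ∧
  (∀ x : K → ℝ, (∀ j, j ∉ S → x j = 0) → x ≠ 0 → 0 < x ⬝ᵥ (B *ᵥ x)) ∧
  (∀ x : K → ℝ, (∀ j, j ∈ S → x j = 0) → B *ᵥ x = 0)

/-- The inverse of `B` computed on the coordinate subspace given by `S`, extended by zero
(`B^{-H}` in the paper). -/
noncomputable def invOn {K : Type*} [Fintype K] [DecidableEq K] (S : Finset K)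
    (B : Matrix K K ℝ) : Matrix K K ℝ :=
  proj K S * (B + proj K Sᶜ)⁻¹ * proj K S

/-- `A ≺_{H} B` : the difference `B - A` belongs to `S_≻^{H}`. -/
def ltOn {K : Type*} [Fintype K] [DecidableEq K] (S : Finset K) (A B : Matrix K K ℝ) : Prop :=
  SPDOn S (B - A)

/-- The best-response map `F_i(X) = (B_i^{-H_i} + π_i (X_{-i})⁻¹ π_i)^{-H_i}`. -/
noncomputable def Fmap {I K : Type*} [Fintype I] [DecidableEq I] [Fintype K] [DecidableEq K]
    (Ki : I → Finset K) (B : I → Matrix K K ℝ) (X : I → Matrix K K ℝ) (i : I) :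
    Matrix K K ℝ :=
  invOn (Ki i) (invOn (Ki i) (B i) +
    proj K (Ki i) * (∑ j ∈ Finset.univ.erase i, X j)⁻¹ * proj K (Ki i))

open scoped MatrixOrder ComplexOrder

/-! Since inversion on `H_i` is antitone, `B¹ ⪯ B²` gives `X¹ = F¹(X¹) ⪯ F²(X¹)`, so it suffices
that every `Y` with `Y ⪯ F(Y)` lies below every fixed point `X` of `F`. Suppose `Y_i ⪯ t X_i` for
all `i`, with `t ≥ 1`. Inverting the sums `X_{-i}` and `Y_{-i}` gives
`π_i (X_{-i})⁻¹ π_i ⪯ t π_i (Y_{-i})⁻¹ π_i`. For some `ε > 0` we have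
`ε π_i (Y_{-i})⁻¹ π_i ⪯ B_i^{-H_i}` for all `i`, and inverting on `H_i` once more improves the
bound to `Y_i ⪯ (1 + (t - 1)/(1 + ε)) X_i`. Iterating drives `t` down to `1`. -/

theorem Matrix.PosDef.inv_le_inv {n 𝕜 : Type*} [Fintype n] [DecidableEq n] [RCLike 𝕜]
    {A B : Matrix n n 𝕜} (hA : A.PosDef) (hAB : A ≤ B) : B⁻¹ ≤ A⁻¹ := by
  -- `fromBlocks B 1 1 A⁻¹` is positive semidefinite iff its Schur complement `B - A` is,
  -- iff its other Schur complement `A⁻¹ - B⁻¹` is.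
  have hB : B.PosDef := by simpa using hA.add_posSemidef hAB
  have := hA.inv.isUnit.invertible
  have := hB.isUnit.invertible
  have hblock : (fromBlocks B 1 1ᴴ A⁻¹).PosSemidef := by
    rwa [PosDef.fromBlocks₂₂ B 1 hA.inv, Matrix.one_mul, conjTranspose_one, Matrix.mul_one,
      nonsing_inv_nonsing_inv _ hA.det_pos.ne'.isUnit]
  simpa [le_iff] using (PosDef.fromBlocks₁₁ 1 A⁻¹ hB).1 hblock

theorem Matrix.PosDef.eventually_smul_le {n : Type*} [Fintype n] [DecidableEq n]
    {P Q : Matrix n n ℝ} (hP : P.PosDef) (hQ : Q.PosSemidef) : ∀ᶠ ε in 𝓝[>] (0 : ℝ), ε • Q ≤ P := by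
  rcases subsingleton_or_nontrivial (Matrix n n ℝ) with _ | _
  · exact Filter.Eventually.of_forall fun _ => (Subsingleton.elim _ _).le
  obtain ⟨r, hr, hrP⟩ : ∃ r > 0, algebraMap ℝ _ r ≤ P :=
    (CFC.exists_pos_algebraMap_le_iff hP.isHermitian).2 fun _ hx =>
      hP.isStrictlyPositive.spectrum_pos hx
  obtain ⟨s, hs⟩ := (finite_real_spectrum (A := Q)).bddAbove
  have hs1 : 0 < max s 1 := lt_max_of_lt_right one_pos
  have hQs : Q ≤ algebraMap ℝ _ (max s 1) :=
    le_algebraMap_of_spectrum_le fun x hx => (hs hx).trans (le_max_left _ _)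
  filter_upwards [Ioc_mem_nhdsGT (div_pos hr hs1)] with ε hε
  calc ε • Q ≤ ε • algebraMap ℝ _ (max s 1) := smul_le_smul_of_nonneg_left hQs hε.1.le
    _ ≤ (r / max s 1) • algebraMap ℝ _ (max s 1) :=
        smul_le_smul_of_nonneg_right hε.2 (hQ.nonneg.trans hQs)
    _ = algebraMap ℝ _ r := by rw [Algebra.smul_def, ← map_mul, div_mul_cancel₀ _ hs1.ne']
    _ ≤ P := hrP

lemma add_le_smul_of_smul_le {E : Type*} [AddCommGroup E] [PartialOrder E]
    [IsOrderedAddMonoid E] [Module ℝ E] [PosSMulMono ℝ E] {C Q R U : E} {ε t : ℝ}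
    (hε : 0 < ε) (ht : 1 ≤ t) (hεQ : ε • Q ≤ C) (hR : R ≤ t • Q) (hU : C + Q ≤ U) :
    C + R ≤ (1 + (1 + ε)⁻¹ * (t - 1)) • U := by
  have hslack : 0 ≤ ((1 + ε)⁻¹ * (t - 1)) • (C - ε • Q) :=
    smul_nonneg (mul_nonneg (by positivity) (sub_nonneg.2 ht)) (sub_nonneg.2 hεQ)
  have hcoef : 1 + (1 + ε)⁻¹ * (t - 1) - t + (1 + ε)⁻¹ * (t - 1) * ε = 0 := by
    field_simp
    ring
  calc C + R ≤ C + t • Q := add_le_add_right hR C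
    _ ≤ (1 + (1 + ε)⁻¹ * (t - 1)) • (C + Q) := by
        rw [← sub_nonneg]
        convert hslack using 1
        linear_combination (norm := module) hcoef • Q
    _ ≤ (1 + (1 + ε)⁻¹ * (t - 1)) • U :=
        smul_le_smul_of_nonneg_left hU (by positivity)

theorem Matrix.le_of_tendsto_smul {n : Type*} [Fintype n] {A B : Matrix n n ℝ}
    (hA : A.IsHermitian) (hB : B.IsHermitian) {t : ℕ → ℝ} (ht : Tendsto t atTop (𝓝 1))
    (h : ∀ m, A ≤ t m • B) : A ≤ B := by
  refine PosSemidef.of_dotProduct_mulVec_nonneg (hB.sub hA) fun x => ?_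
  have hlim : Tendsto (fun m => t m * (x ⬝ᵥ (B *ᵥ x)) - x ⬝ᵥ (A *ᵥ x)) atTop
      (𝓝 (1 * (x ⬝ᵥ (B *ᵥ x)) - x ⬝ᵥ (A *ᵥ x))) :=
    (ht.mul_const _).sub_const _
  refine ge_of_tendsto' (by simpa [sub_mulVec, dotProduct_sub] using hlim) fun m => ?_
  simpa [sub_mulVec, dotProduct_sub, smul_mulVec] using (h m).dotProduct_mulVec_nonneg x

theorem Matrix.le_of_le_smul_contraction {I n : Type*} [Fintype n] {X Y : I → Matrix n n ℝ}
    (hX : ∀ j, (X j).IsHermitian) (hY : ∀ j, (Y j).IsHermitian) {t₀ c : ℝ} (ht₀ : 1 ≤ t₀)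
    (h₀ : ∀ j, Y j ≤ t₀ • X j) (hc₀ : 0 ≤ c) (hc₁ : c < 1)
    (hstep : ∀ t, 1 ≤ t → (∀ j, Y j ≤ t • X j) → ∀ j, Y j ≤ (1 + c * (t - 1)) • X j) (j : I) :
    Y j ≤ X j := by
  set t : ℕ → ℝ := fun m => 1 + c ^ m * (t₀ - 1)
  have ht1 : ∀ m, 1 ≤ t m := fun m =>
    le_add_of_nonneg_right (mul_nonneg (pow_nonneg hc₀ m) (sub_nonneg.2 ht₀))
  have hiter : ∀ m, ∀ j, Y j ≤ t m • X j := by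
    intro m
    induction m with
    | zero => simpa [t] using h₀
    | succ m ih =>
      convert hstep _ (ht1 m) ih using 3
      simp only [t, pow_succ]
      ring
  have hlim : Tendsto t atTop (𝓝 1) := by
    simpa using ((tendsto_pow_atTop_nhds_zero_of_lt_one hc₀ hc₁).mul_const (t₀ - 1)).const_add 1
  exact le_of_tendsto_smul (hY j) (hX j) hlim fun m => hiter m j

section proj

variable {K : Type*} [Fintype K] [DecidableEq K] (S : Finset K)

lemma proj_isHermitian : (proj K S).IsHermitian := by
  simp [proj, IsHermitian]

lemma proj_transpose : (proj K S)ᵀ = proj K S := by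
  simp [proj]

lemma proj_posSemidef : (proj K S).PosSemidef :=
  PosSemidef.diagonal fun k => by by_cases h : k ∈ S <;> simp [h]

lemma proj_mul_self : proj K S * proj K S = proj K S := by
  simp [proj, diagonal_mul_diagonal]

lemma proj_mul_proj_compl : proj K S * proj K Sᶜ = 0 := by
  rw [proj, proj, diagonal_mul_diagonal, ← diagonal_zero]
  congr 1
  funext k
  by_cases h : k ∈ S <;> simp [h]

lemma proj_compl_mul_proj : proj K Sᶜ * proj K S = 0 := by
  rw [proj, proj, diagonal_mul_diagonal, ← diagonal_zero]
  congr 1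
  funext k
  by_cases h : k ∈ S <;> simp [h]

lemma proj_add_proj_compl : proj K S + proj K Sᶜ = 1 := by
  rw [proj, proj, diagonal_add, ← diagonal_one]
  congr 1
  funext k
  by_cases h : k ∈ S <;> simp [h]

lemma proj_mulVec_apply (x : K → ℝ) (k : K) : (proj K S *ᵥ x) k = if k ∈ S then x k else 0 := by
  simp [proj, mulVec_diagonal]

end proj

section invOn

variable {K : Type*} [Fintype K] [DecidableEq K] {S : Finset K}

lemma mul_proj_compl_eq_zero {B : Matrix K K ℝ} (hB : proj K S * B * proj K S = B) :
    B * proj K Sᶜ = 0 := by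
  rw [← hB, Matrix.mul_assoc, proj_mul_proj_compl, Matrix.mul_zero]

lemma proj_compl_mul_eq_zero {B : Matrix K K ℝ} (hB : proj K S * B * proj K S = B) :
    proj K Sᶜ * B = 0 := by
  rw [← hB, ← Matrix.mul_assoc, ← Matrix.mul_assoc, proj_compl_mul_proj, Matrix.zero_mul,
    Matrix.zero_mul]

lemma proj_mul_invOn_mul_proj (B : Matrix K K ℝ) :
    proj K S * invOn S B * proj K S = invOn S B := by
  simp only [invOn, Matrix.mul_assoc, proj_mul_self]
  simp only [← Matrix.mul_assoc, proj_mul_self]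

-- `B + π_{Hᶜ}` is block diagonal: `B` on `H` and the identity on `Hᶜ`.
lemma invOn_add_proj_compl {B : Matrix K K ℝ} (hB : proj K S * B * proj K S = B)
    (hM : (B + proj K Sᶜ).PosDef) : invOn S B + proj K Sᶜ = (B + proj K Sᶜ)⁻¹ := by
  rw [invOn]
  set M := B + proj K Sᶜ
  have hdet : IsUnit M.det := hM.det_pos.ne'.isUnit
  have hMP : M * proj K Sᶜ = proj K Sᶜ := by
    rw [Matrix.add_mul, mul_proj_compl_eq_zero hB, proj_mul_self, zero_add]
  have hPM : proj K Sᶜ * M = proj K Sᶜ := by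
    rw [Matrix.mul_add, proj_compl_mul_eq_zero hB, proj_mul_self, zero_add]
  have hMiP : M⁻¹ * proj K Sᶜ = proj K Sᶜ := by
    rw [← hMP, ← Matrix.mul_assoc, nonsing_inv_mul _ hdet, Matrix.one_mul, hMP]
  have hPMi : proj K Sᶜ * M⁻¹ = proj K Sᶜ := by
    rw [← hPM, Matrix.mul_assoc, mul_nonsing_inv _ hdet, Matrix.mul_one, hPM]
  have hP : proj K S = 1 - proj K Sᶜ := eq_sub_of_add_eq (proj_add_proj_compl S)
  rw [hP]
  simp only [Matrix.sub_mul, Matrix.mul_sub, Matrix.one_mul, Matrix.mul_one, hMiP, hPMi,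
    proj_mul_self]
  abel

lemma posDef_invOn_add_proj_compl {B : Matrix K K ℝ} (hB : proj K S * B * proj K S = B)
    (hM : (B + proj K Sᶜ).PosDef) : (invOn S B + proj K Sᶜ).PosDef := by
  rw [invOn_add_proj_compl hB hM]
  exact hM.inv

lemma invOn_invOn {B : Matrix K K ℝ} (hB : proj K S * B * proj K S = B)
    (hM : (B + proj K Sᶜ).PosDef) : invOn S (invOn S B) = B := by
  have h := invOn_add_proj_compl (proj_mul_invOn_mul_proj B) (posDef_invOn_add_proj_compl hB hM)
  rw [invOn_add_proj_compl hB hM, nonsing_inv_nonsing_inv _ hM.det_pos.ne'.isUnit] at h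
  exact add_right_cancel h

lemma invOn_antitone {A B : Matrix K K ℝ} (hA : (A + proj K Sᶜ).PosDef) (hAB : A ≤ B) :
    invOn S B ≤ invOn S A := by
  have h := star_left_conjugate_le_conjugate
    (hA.inv_le_inv (add_le_add_left hAB (proj K Sᶜ))) (proj K S)
  rwa [star_eq_conjTranspose, (proj_isHermitian S).eq] at h

lemma invOn_smul {B : Matrix K K ℝ} (hB : proj K S * B * proj K S = B)
    (hM : (B + proj K Sᶜ).PosDef) {c : ℝ} (hc : c ≠ 0) :
    invOn S (c • B) = c⁻¹ • invOn S B := by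
  have hinv : (B + proj K Sᶜ) * (invOn S B + proj K Sᶜ) = 1 := by
    rw [invOn_add_proj_compl hB hM, mul_nonsing_inv _ hM.det_pos.ne'.isUnit]
  have hBP := mul_proj_compl_eq_zero hB
  have hPI := proj_compl_mul_eq_zero (proj_mul_invOn_mul_proj (S := S) B)
  have hcinv : (c • B + proj K Sᶜ) * (c⁻¹ • invOn S B + proj K Sᶜ) = 1 := by
    simp only [Matrix.add_mul, Matrix.mul_add, Matrix.smul_mul, Matrix.mul_smul, hBP, hPI,
      proj_mul_self, smul_zero, add_zero, inv_smul_smul₀ hc] at hinv ⊢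
    exact hinv
  rw [invOn, inv_eq_right_inv hcinv, Matrix.mul_add, Matrix.add_mul, Matrix.mul_smul,
    Matrix.smul_mul, proj_mul_invOn_mul_proj, proj_mul_proj_compl, Matrix.zero_mul, add_zero]

lemma eventually_smul_le_of_posDef_add_proj_compl {C Q : Matrix K K ℝ}
    (hC : proj K S * C * proj K S = C) (hCP : (C + proj K Sᶜ).PosDef) (hQ : Q.PosSemidef)
    (hQS : proj K S * Q * proj K S = Q) : ∀ᶠ ε in 𝓝[>] (0 : ℝ), ε • Q ≤ C := by
  filter_upwards [hCP.eventually_smul_le hQ] with ε hε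
  have h := star_left_conjugate_le_conjugate hε (proj K S)
  rwa [star_eq_conjTranspose, (proj_isHermitian S).eq, Matrix.mul_smul, Matrix.smul_mul, hQS,
    Matrix.mul_add, Matrix.add_mul, hC, proj_mul_proj_compl, Matrix.zero_mul, add_zero] at h

end invOn

section SPDOn

variable {K : Type*} [Fintype K] [DecidableEq K] {S : Finset K} {B : Matrix K K ℝ}

lemma SPDOn.mul_proj_compl_eq_zero (h : SPDOn S B) : B * proj K Sᶜ = 0 := by
  refine ext_iff_mulVec.2 fun x => ?_
  rw [← mulVec_mulVec, zero_mulVec]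
  exact h.2.2 _ fun j hj => by simp [proj_mulVec_apply, hj]

lemma SPDOn.proj_mul_mul_proj (h : SPDOn S B) : proj K S * B * proj K S = B := by
  have hPB : proj K Sᶜ * B = 0 := by
    have := congrArg conjTranspose h.mul_proj_compl_eq_zero
    rwa [conjTranspose_mul, (proj_isHermitian Sᶜ).eq, h.1.1.eq, conjTranspose_zero] at this
  simp [eq_sub_of_add_eq (proj_add_proj_compl S), Matrix.sub_mul, Matrix.mul_sub, hPB,
    h.mul_proj_compl_eq_zero]

lemma SPDOn.dotProduct_mulVec_pos (h : SPDOn S B) {x : K → ℝ} (hx : proj K S *ᵥ x ≠ 0) :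
    0 < x ⬝ᵥ (B *ᵥ x) := by
  rw [← h.proj_mul_mul_proj, ← mulVec_mulVec, ← mulVec_mulVec, dotProduct_mulVec,
    ← mulVec_transpose, proj_transpose]
  exact h.2.1 _ (fun j hj => by simp [proj_mulVec_apply, hj]) hx

lemma SPDOn.posDef_add_proj_compl (h : SPDOn S B) : (B + proj K Sᶜ).PosDef := by
  refine PosDef.of_dotProduct_mulVec_pos (h.1.1.add (proj_isHermitian Sᶜ)) fun x hx => ?_
  have hB := h.1.dotProduct_mulVec_nonneg x
  have hP := (proj_posSemidef Sᶜ).dotProduct_mulVec_nonneg x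
  rw [star_trivial] at hB hP ⊢
  rw [add_mulVec, dotProduct_add]
  by_cases hPx : proj K S *ᵥ x = 0
  · have hP'x : proj K Sᶜ *ᵥ x = x := by
      rw [eq_sub_of_add_eq' (proj_add_proj_compl S), sub_mulVec, hPx, one_mulVec, sub_zero]
    have := dotProduct_star_self_pos_iff.2 hx
    rw [star_trivial] at this
    rw [hP'x]
    linarith
  · linarith [h.dotProduct_mulVec_pos hPx]

lemma SPDOn.smul (h : SPDOn S B) {c : ℝ} (hc : 0 < c) : SPDOn S (c • B) := by
  refine ⟨h.1.smul hc.le, fun x hx hx0 => ?_, fun x hx => ?_⟩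
  · rw [smul_mulVec, dotProduct_smul, smul_eq_mul]
    exact mul_pos hc (h.2.1 x hx hx0)
  · rw [smul_mulVec, h.2.2 x hx, smul_zero]

lemma SPDOn.posDef_invOn_add_proj_compl (h : SPDOn S B) : (invOn S B + proj K Sᶜ).PosDef :=
  _root_.posDef_invOn_add_proj_compl h.proj_mul_mul_proj h.posDef_add_proj_compl

lemma SPDOn.invOn_invOn (h : SPDOn S B) : invOn S (invOn S B) = B :=
  _root_.invOn_invOn h.proj_mul_mul_proj h.posDef_add_proj_compl

lemma SPDOn.le_smul_of_invOn_le_smul {A B : Matrix K K ℝ} (hA : SPDOn S A) (hB : SPDOn S B)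
    {c : ℝ} (hc : 0 < c) (h : invOn S B ≤ c • invOn S A) : A ≤ c • B := by
  have hcB := hB.smul hc
  have h' : invOn S (c • B) ≤ invOn S A := by
    rw [invOn_smul hB.proj_mul_mul_proj hB.posDef_add_proj_compl hc.ne']
    simpa [inv_smul_smul₀ hc.ne'] using smul_le_smul_of_nonneg_left h (inv_nonneg.2 hc.le)
  simpa only [hA.invOn_invOn, hcB.invOn_invOn] using
    invOn_antitone hcB.posDef_invOn_add_proj_compl h'

end SPDOn

section Game

variable {I K : Type*} [Fintype I] [DecidableEq I] [Fintype K] [DecidableEq K] (Ki : I → Finset K)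

/-- The term `π_i (X_{-i})⁻¹ π_i` of `F_i(X)`. -/
noncomputable def coupling (X : I → Matrix K K ℝ) (i : I) : Matrix K K ℝ :=
  proj K (Ki i) * (∑ j ∈ Finset.univ.erase i, X j)⁻¹ * proj K (Ki i)

lemma Fmap_eq_invOn_add_coupling (B X : I → Matrix K K ℝ) (i : I) :
    Fmap Ki B X i = invOn (Ki i) (invOn (Ki i) (B i) + coupling Ki X i) :=
  rfl

variable {Ki}

lemma coupling_posSemidef {X : I → Matrix K K ℝ} (hX : ∀ j, (X j).PosSemidef) (i : I) :
    (coupling Ki X i).PosSemidef := by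
  have h := (posSemidef_sum (Finset.univ.erase i) fun j _ => hX j).inv.mul_mul_conjTranspose_same
    (proj K (Ki i))
  rwa [(proj_isHermitian _).eq] at h

lemma proj_mul_coupling_mul_proj (X : I → Matrix K K ℝ) (i : I) :
    proj K (Ki i) * coupling Ki X i * proj K (Ki i) = coupling Ki X i := by
  simp only [coupling, Matrix.mul_assoc, proj_mul_self]
  simp only [← Matrix.mul_assoc, proj_mul_self]

lemma posDef_sum_erase (hcover : ∀ k, 2 ≤ (Finset.univ.filter fun j => k ∈ Ki j).card)
    {X : I → Matrix K K ℝ} (hX : ∀ j, SPDOn (Ki j) (X j)) (i : I) :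
    (∑ j ∈ Finset.univ.erase i, X j).PosDef := by
  refine PosDef.of_dotProduct_mulVec_pos (posSemidef_sum _ fun j _ => (hX j).1).1 fun x hx => ?_
  obtain ⟨k, hk⟩ := Function.ne_iff.1 hx
  obtain ⟨j, hj, hji⟩ := Finset.exists_mem_ne (hcover k) i
  have hPx : proj K (Ki j) *ᵥ x ≠ 0 := fun h0 => hk <| by
    simpa [proj_mulVec_apply, (Finset.mem_filter.1 hj).2] using congrFun h0 k
  rw [star_trivial, sum_mulVec, dotProduct_sum]
  refine Finset.sum_pos' (fun l _ => by simpa using (hX l).1.dotProduct_mulVec_nonneg x)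
    ⟨j, Finset.mem_erase.2 ⟨hji, Finset.mem_univ j⟩, (hX j).dotProduct_mulVec_pos hPx⟩

lemma coupling_le_smul_coupling (hcover : ∀ k, 2 ≤ (Finset.univ.filter fun j => k ∈ Ki j).card)
    {X Y : I → Matrix K K ℝ} (hY : ∀ j, SPDOn (Ki j) (Y j)) {t : ℝ} (ht : 0 < t)
    (h : ∀ j, Y j ≤ t • X j) (i : I) : coupling Ki X i ≤ t • coupling Ki Y i := by
  have hsum : t⁻¹ • ∑ j ∈ Finset.univ.erase i, Y j ≤ ∑ j ∈ Finset.univ.erase i, X j := by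
    rw [Finset.smul_sum]
    refine Finset.sum_le_sum fun j _ => ?_
    simpa [inv_smul_smul₀ ht.ne'] using smul_le_smul_of_nonneg_left (h j) (inv_nonneg.2 ht.le)
  have hinv := ((posDef_sum_erase hcover hY i).smul (inv_pos.2 ht)).inv_le_inv hsum
  have := invertibleOfNonzero (inv_ne_zero ht.ne')
  rw [Matrix.inv_smul _ t⁻¹ (posDef_sum_erase hcover hY i).det_pos.ne'.isUnit,
    invOf_eq_inv, inv_inv] at hinv
  have hconj := star_left_conjugate_le_conjugate hinv (proj K (Ki i))
  rwa [star_eq_conjTranspose, (proj_isHermitian _).eq, Matrix.mul_smul, Matrix.smul_mul] at hconj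

lemma invOn_Fmap {B X : I → Matrix K K ℝ} {i : I} (hB : SPDOn (Ki i) (B i))
    (hX : ∀ j, (X j).PosSemidef) :
    invOn (Ki i) (Fmap Ki B X i) = invOn (Ki i) (B i) + coupling Ki X i := by
  rw [Fmap_eq_invOn_add_coupling]
  refine invOn_invOn ?_ ?_
  · rw [Matrix.mul_add, Matrix.add_mul, proj_mul_invOn_mul_proj, proj_mul_coupling_mul_proj]
  · rw [add_right_comm]
    exact hB.posDef_invOn_add_proj_compl.add_posSemidef (coupling_posSemidef hX i)

lemma Fmap_le_Fmap {B₁ B₂ X : I → Matrix K K ℝ} {i : I} (hB₁ : SPDOn (Ki i) (B₁ i))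
    (hB₂ : SPDOn (Ki i) (B₂ i)) (hB : B₁ i ≤ B₂ i) (hX : ∀ j, (X j).PosSemidef) :
    Fmap Ki B₁ X i ≤ Fmap Ki B₂ X i := by
  rw [Fmap_eq_invOn_add_coupling, Fmap_eq_invOn_add_coupling]
  refine invOn_antitone ?_ (add_le_add_left (invOn_antitone hB₁.posDef_add_proj_compl hB) _)
  rw [add_right_comm]
  exact hB₂.posDef_invOn_add_proj_compl.add_posSemidef (coupling_posSemidef hX i)

theorem le_of_le_Fmap_of_eq_Fmap (hcover : ∀ k, 2 ≤ (Finset.univ.filter fun j => k ∈ Ki j).card)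
    {B X Y : I → Matrix K K ℝ} (hB : ∀ i, SPDOn (Ki i) (B i)) (hX : ∀ i, SPDOn (Ki i) (X i))
    (hY : ∀ i, SPDOn (Ki i) (Y i)) (hXF : ∀ i, X i = Fmap Ki B X i)
    (hYF : ∀ i, Y i ≤ Fmap Ki B Y i) (i : I) : Y i ≤ X i := by
  have hXinv : ∀ i, invOn (Ki i) (X i) = invOn (Ki i) (B i) + coupling Ki X i := fun i => by
    conv_lhs => rw [hXF i]
    exact invOn_Fmap (hB i) fun j => (hX j).1
  have hYinv : ∀ i, invOn (Ki i) (B i) + coupling Ki Y i ≤ invOn (Ki i) (Y i) := fun i => by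
    simpa only [invOn_Fmap (hB i) fun j => (hY j).1] using
      invOn_antitone (hY i).posDef_add_proj_compl (hYF i)
  obtain ⟨ε, hεQ, hε⟩ : ∃ ε : ℝ, (∀ i, ε • coupling Ki Y i ≤ invOn (Ki i) (B i)) ∧ 0 < ε :=
    ((Filter.eventually_all.2 fun i =>
      eventually_smul_le_of_posDef_add_proj_compl (proj_mul_invOn_mul_proj _)
        (hB i).posDef_invOn_add_proj_compl (coupling_posSemidef (fun j => (hY j).1) i)
        (proj_mul_coupling_mul_proj Y i)).and self_mem_nhdsWithin).exists
  obtain ⟨δ, hδ, hδ₀, hδ₁⟩ : ∃ δ : ℝ, (∀ j, δ • Y j ≤ X j) ∧ δ ∈ Set.Ioo 0 1 :=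
    ((Filter.eventually_all.2 fun j =>
      eventually_smul_le_of_posDef_add_proj_compl (hX j).proj_mul_mul_proj
        (hX j).posDef_add_proj_compl (hY j).1 (hY j).proj_mul_mul_proj).and
      (Ioo_mem_nhdsGT one_pos)).exists
  refine Matrix.le_of_le_smul_contraction (c := (1 + ε)⁻¹) (fun j => (hX j).1.1)
    (fun j => (hY j).1.1) (one_le_inv₀ hδ₀ |>.2 hδ₁.le) (fun j => ?_) (by positivity)
    (inv_lt_one_of_one_lt₀ (by linarith))
    (fun t ht h j => (hY j).le_smul_of_invOn_le_smul (hX j) (by positivity) ?_) i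
  · simpa [inv_smul_smul₀ hδ₀.ne'] using smul_le_smul_of_nonneg_left (hδ j) (inv_nonneg.2 hδ₀.le)
  · rw [hXinv j]
    exact add_le_smul_of_smul_le hε ht (hεQ j)
      (coupling_le_smul_coupling hcover hY (by linarith) h j) (hYinv j)

end Game

/-- Equilibria are monotone in `B`: if `B¹ ⪯ B²` componentwise and `X¹, X²` are the
corresponding equilibria, then `X¹ ⪯ X²` componentwise. -/
theorem stmt_12 {I K : Type*} [Fintype I] [DecidableEq I] [Fintype K] [DecidableEq K]
    (Ki : I → Finset K)
    (hacc : ∀ k : K, 3 ≤ (Finset.univ.filter (fun i : I => k ∈ Ki i)).card)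
    (B1 B2 : I → Matrix K K ℝ)
    (hB1 : ∀ i, SPDOn (Ki i) (B1 i)) (hB2 : ∀ i, SPDOn (Ki i) (B2 i))
    (hB : ∀ i, (B2 i - B1 i).PosSemidef)
    (X1 X2 : I → Matrix K K ℝ)
    (hX1 : ∀ i, SPDOn (Ki i) (X1 i)) (hX2 : ∀ i, SPDOn (Ki i) (X2 i))
    (hfix1 : ∀ i, X1 i = Fmap Ki B1 X1 i) (hfix2 : ∀ i, X2 i = Fmap Ki B2 X2 i) :
    ∀ i, (X2 i - X1 i).PosSemidef :=
  le_of_le_Fmap_of_eq_Fmap (fun k => (hacc k).trans' (by norm_num)) hB2 hX2 hX1 hfix2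
    fun j => (hfix1 j).trans_le (Fmap_le_Fmap (hB1 j) (hB2 j) (hB j) fun l => (hX1 l).1)
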